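/- Let R be a positive integer and let K : ℤ → ℂ be a periodic function with period R. Then for any finitely supported family of complex coefficients (a_m)_{m ∈ ℤ}, ∫_0^1 |∑_m a_m K(m) e(mt)| dt ≤ ((1/R) ∑_{j=1}^R |K̂(j/R)|) · ∫_0^1 |∑_m a_m e(mt)| dt, where K̂(j/R) = ∑_{s=1}^R K(s) e(−sj/R) is the discrete Fourier transform of K on ℤ/Rℤ. -/

import Mathlib

open MeasureTheory

/-- `e z = e^{2πiz}`. -/
noncomputable def e (x : ℝ) : ℂ := Complex.exp (2 * Real.pi * Complex.I * x)

/-!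
Fourier inversion on `ℤ/Rℤ` writes `K m = R⁻¹ ∑ⱼ K̂(j) e(mj/R)`, so multiplying the coefficients
of `g(t) = ∑ₘ aₘ e(mt)` by `K` turns `g` into the average `R⁻¹ ∑ⱼ K̂(j) g(t + j/R)` of its
translates. The triangle inequality and the translation invariance of `∫₀¹ |g|` for the
`1`-periodic `g` then give the bound.
-/

open Finset

lemma e_add (x y : ℝ) : e (x + y) = e x * e y := by
  rw [e, e, e, ← Complex.exp_add]; congr 1; push_cast; ring

lemma e_natCast_mul (n : ℕ) (x : ℝ) : e (n * x) = e x ^ n := by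
  rw [e, e, ← Complex.exp_nat_mul]; congr 1; push_cast; ring

lemma e_eq_one_iff {x : ℝ} : e x = 1 ↔ ∃ n : ℤ, x = n := by
  have h2πI : (2 * Real.pi * Complex.I : ℂ) ≠ 0 := by simp [Real.pi_ne_zero]
  rw [e, Complex.exp_eq_one_iff]
  refine exists_congr fun n => ⟨fun h => ?_, fun h => by rw [h]; push_cast; ring⟩
  exact_mod_cast mul_left_cancel₀ h2πI (h.trans (mul_comm _ _))

lemma e_intCast (k : ℤ) : e k = 1 := e_eq_one_iff.2 ⟨k, rfl⟩

lemma sum_Icc_pow_eq_zero {F : Type*} [Field F] {ζ : F} {n : ℕ} (hζn : ζ ^ n = 1)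
    (hζ : ζ ≠ 1) : ∑ j ∈ Icc 1 n, ζ ^ j = 0 := by
  rw [← Ico_add_one_right_eq_Icc, sum_Ico_eq_sum_range, Nat.add_sub_cancel]
  simp only [pow_add, pow_one, ← mul_sum, geom_sum_eq hζ, hζn, sub_self, zero_div, mul_zero]

lemma sum_Icc_e_mul_div {R : ℕ} (hR : 0 < R) (k : ℤ) :
    ∑ j ∈ Icc 1 R, e (k * j / R) = if (R : ℤ) ∣ k then (R : ℂ) else 0 := by
  have hR' : (R : ℝ) ≠ 0 := by positivity
  have hpow (j : ℕ) : e (k * j / R) = e (k / R) ^ j := by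
    rw [← e_natCast_mul]; ring_nf
  simp only [hpow]
  have hdvd : e (k / R) = 1 ↔ (R : ℤ) ∣ k := by
    simp only [e_eq_one_iff, div_eq_iff hR']
    exact ⟨fun ⟨n, hn⟩ => ⟨n, by exact_mod_cast hn.trans (mul_comm _ _)⟩,
      fun ⟨n, hn⟩ => ⟨n, by rw [hn]; push_cast; ring⟩⟩
  split_ifs with hk
  · simp [hdvd.2 hk]
  · refine sum_Icc_pow_eq_zero ?_ (mt hdvd.1 hk)
    rw [← e_natCast_mul, mul_div_cancel₀ _ hR', e_intCast]

lemma Function.Periodic.sum_Icc_ite_dvd_sub {M : Type*} [AddCommMonoid M] {K : ℤ → M} {R : ℕ}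
    (hK : Function.Periodic K R) (hR : 0 < R) (m : ℤ) :
    ∑ s ∈ Icc (1 : ℤ) R, (if (R : ℤ) ∣ m - s then K s else 0) = K m := by
  have hR' : (0 : ℤ) < R := by exact_mod_cast hR
  -- the representative of `m` modulo `R` in `[1, R]`
  set s₀ := (m - 1) % R + 1
  have hm : m = s₀ + (m - 1) / R * R := by
    have := Int.emod_add_mul_ediv (m - 1) R; linarith
  have hs₀ : s₀ ∈ Icc (1 : ℤ) R := by
    have := Int.emod_nonneg (m - 1) hR'.ne'
    have := Int.emod_lt_of_pos (m - 1) hR'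
    rw [mem_Icc]; omega
  rw [sum_eq_single_of_mem s₀ hs₀, if_pos ⟨(m - 1) / R, by linarith⟩, hm]
  · simpa using (hK.int_mul ((m - 1) / R) s₀).symm
  · intro s hs hne
    refine if_neg fun hdvd => hne ?_
    have hdvd' : (R : ℤ) ∣ s₀ - s := by
      rw [show s₀ - s = m - s - (m - 1) / R * R by linarith]
      exact dvd_sub hdvd (dvd_mul_left _ _)
    rw [mem_Icc] at hs hs₀
    have := Int.eq_zero_of_abs_lt_dvd hdvd' (by rw [abs_lt]; omega)
    omega

/-- `dft R K j` is the paper's `K̂(j/R)`. -/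
noncomputable def dft (R : ℕ) (K : ℤ → ℂ) (j : ℕ) : ℂ :=
  ∑ s ∈ Icc (1 : ℤ) R, K s * e (-((s : ℝ) * (j : ℝ)) / (R : ℝ))

lemma Function.Periodic.eq_inv_mul_sum_dft_mul_e {K : ℤ → ℂ} {R : ℕ}
    (hK : Function.Periodic K R) (hR : 0 < R) (m : ℤ) :
    K m = (R : ℂ)⁻¹ * ∑ j ∈ Icc 1 R, dft R K j * e (m * j / R) := by
  have hshift (s : ℤ) (j : ℕ) :
      e (-((s : ℝ) * j) / R) * e (m * j / R) = e ((m - s : ℤ) * j / R) := by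
    rw [← e_add]; congr 1; push_cast; ring
  have hsum : ∑ j ∈ Icc 1 R, dft R K j * e (m * j / R) =
      ∑ s ∈ Icc (1 : ℤ) R, (if (R : ℤ) ∣ m - s then K s else 0) * R := by
    simp only [dft, sum_mul, mul_assoc, hshift]
    rw [sum_comm]
    simp only [← mul_sum, sum_Icc_e_mul_div hR, mul_ite, mul_zero, mul_comm]
  rw [hsum, ← sum_mul, hK.sum_Icc_ite_dvd_sub hR, mul_comm (K m),
    inv_mul_cancel_left₀ (Nat.cast_ne_zero.2 hR.ne')]

noncomputable def trigPoly (S : Finset ℤ) (a : ℤ → ℂ) (t : ℝ) : ℂ :=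
  ∑ m ∈ S, a m * e (m * t)

lemma continuous_trigPoly (S : Finset ℤ) (a : ℤ → ℂ) : Continuous (trigPoly S a) := by
  unfold trigPoly e; fun_prop

lemma trigPoly_periodic (S : Finset ℤ) (a : ℤ → ℂ) : Function.Periodic (trigPoly S a) 1 := by
  intro t
  simp only [trigPoly, mul_add, mul_one, e_add, e_intCast]

lemma Function.Periodic.trigPoly_mul_eq_sum_translates {K : ℤ → ℂ} {R : ℕ}
    (hK : Function.Periodic K R) (hR : 0 < R) (S : Finset ℤ) (a : ℤ → ℂ) (t : ℝ) :
    trigPoly S (fun m => a m * K m) t =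
      ∑ j ∈ Icc 1 R, ((R : ℂ)⁻¹ * dft R K j) * trigPoly S a (t + j / R) := by
  simp only [trigPoly, mul_sum]
  rw [sum_comm]
  refine sum_congr rfl fun m _ => ?_
  rw [hK.eq_inv_mul_sum_dft_mul_e hR m, mul_sum, mul_sum, sum_mul]
  refine sum_congr rfl fun j _ => ?_
  rw [mul_add, e_add, mul_div_assoc]
  ring

lemma Function.Periodic.intervalIntegral_norm_sum_smul_comp_add_le {𝕜 E ι : Type*}
    [NormedField 𝕜] [NormedAddCommGroup E] [NormedSpace 𝕜 E] {g : ℝ → E} {T : ℝ}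
    (hper : Function.Periodic g T) (hg : Continuous g) (hT : 0 ≤ T)
    (s : Finset ι) (c : ι → 𝕜) (x : ι → ℝ) :
    ∫ t in (0 : ℝ)..T, ‖∑ i ∈ s, c i • g (t + x i)‖ ≤
      (∑ i ∈ s, ‖c i‖) * ∫ t in (0 : ℝ)..T, ‖g t‖ := by
  have hshift (y : ℝ) : ∫ t in (0 : ℝ)..T, ‖g (t + y)‖ = ∫ t in (0 : ℝ)..T, ‖g t‖ := by
    rw [intervalIntegral.integral_comp_add_right (fun t => ‖g t‖)]
    simpa [add_comm] using (hper.comp norm).intervalIntegral_add_eq y 0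
  calc ∫ t in (0 : ℝ)..T, ‖∑ i ∈ s, c i • g (t + x i)‖
      ≤ ∫ t in (0 : ℝ)..T, ∑ i ∈ s, ‖c i‖ * ‖g (t + x i)‖ := by
        refine intervalIntegral.integral_mono_on hT
          (Continuous.intervalIntegrable (by fun_prop) _ _)
          (Continuous.intervalIntegrable (by fun_prop) _ _) fun t _ => ?_
        simpa only [norm_smul] using norm_sum_le s fun i => c i • g (t + x i)
    _ = (∑ i ∈ s, ‖c i‖) * ∫ t in (0 : ℝ)..T, ‖g t‖ := by
        rw [intervalIntegral.integral_finsetSum fun i _ =>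
          Continuous.intervalIntegrable (by fun_prop) _ _, sum_mul]
        simp only [intervalIntegral.integral_const_mul, hshift]

/-- Lemma 3.4: if `K : ℤ → ℂ` is periodic with period `R`, then for any finitely supported
family of coefficients (here supported on a finite set `S`),
`∫_0^1 |∑_m a_m K(m) e(mt)| dt ≤ ((1/R) ∑_{j=1}^R |K̂(j/R)|) ∫_0^1 |∑_m a_m e(mt)| dt`,
where `K̂(j/R) = ∑_{s=1}^R K(s) e(−sj/R)`. -/
theorem periodic_multiplier_bound
    (R : ℕ) (hR : 0 < R) (K : ℤ → ℂ) (hK : ∀ m : ℤ, K (m + (R : ℤ)) = K m)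
    (S : Finset ℤ) (a : ℤ → ℂ) :
    (∫ t in (0:ℝ)..1, ‖∑ m ∈ S, a m * K m * e ((m : ℝ) * t)‖) ≤
      ((1 / (R : ℝ)) * ∑ j ∈ Finset.Icc 1 R,
          ‖∑ s ∈ Finset.Icc (1 : ℤ) (R : ℤ), K s * e (-((s : ℝ) * (j : ℝ)) / (R : ℝ))‖) *
        ∫ t in (0:ℝ)..1, ‖∑ m ∈ S, a m * e ((m : ℝ) * t)‖ := by
  have hcoeff (j : ℕ) : ‖(R : ℂ)⁻¹ * dft R K j‖ = 1 / R * ‖dft R K j‖ := by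
    rw [norm_mul, norm_inv, Complex.norm_natCast, one_div]
  calc ∫ t in (0 : ℝ)..1, ‖trigPoly S (fun m => a m * K m) t‖
      = ∫ t in (0 : ℝ)..1,
          ‖∑ j ∈ Icc 1 R, ((R : ℂ)⁻¹ * dft R K j) • trigPoly S a (t + j / R)‖ := by
        simp only [Function.Periodic.trigPoly_mul_eq_sum_translates hK hR, smul_eq_mul]
    _ ≤ (∑ j ∈ Icc 1 R, ‖(R : ℂ)⁻¹ * dft R K j‖) * ∫ t in (0 : ℝ)..1, ‖trigPoly S a t‖ :=
        (trigPoly_periodic S a).intervalIntegral_norm_sum_smul_comp_add_le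
          (continuous_trigPoly S a) zero_le_one _ _ _
    _ = _ := by simp only [hcoeff, ← mul_sum]; rfl
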